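/- arXiv:math/9810100 — 2 statements merged into one kernel-verified Lean document; each statement's English description precedes it below -/
import Mathlib

section
/- Let B : Matrix (Fin 4) (Fin 4) ℤ be the matrix with rows (0,1,1,1), (1,0,1,1), (1,1,0,1), (1,1,0,0). Let H be the subgroup of the additive group Fin 4 → ℤ generated by the four elements rᵢ (i : Fin 4) defined by rᵢ j = (if i = j then 1 else 0) − B i j. Then there is an additive group isomorphism ψ from (Fin 4 → ℤ) ⧸ H onto ZMod 2 × ZMod 6 sending the class of the standard basis vector e₀ to (0,1), of e₁ to (1,1), of e₂ to (0,4), and of e₃ to (1,2); consequently the class of e₀+e₁+e₂+e₃ is sent to (0,2). -/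
/-- The matrix `B` with rows `(0,1,1,1), (1,0,1,1), (1,1,0,1), (1,1,0,0)`. -/
def B : Matrix (Fin 4) (Fin 4) ℤ := !![0,1,1,1; 1,0,1,1; 1,1,0,1; 1,1,0,0]

/-- The generators `rᵢ j = (if i = j then 1 else 0) − B i j` of the relation subgroup. -/
def r (i : Fin 4) : Fin 4 → ℤ := fun j => (if i = j then 1 else 0) - B i j

/-- The subgroup of `Fin 4 → ℤ` generated by the `rᵢ`. -/
def H : AddSubgroup (Fin 4 → ℤ) := AddSubgroup.closure (Set.range r)

/-- The standard basis vector `eᵢ`. -/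
def e (i : Fin 4) : Fin 4 → ℤ := Pi.single i 1

/-!
The linear map `x ↦ (x₁ + x₃ mod 2, x₀ + x₁ + 4x₂ + 2x₃ mod 6)` kills every `rᵢ`, so it descends
to the quotient. Conversely, with `u = [e₁ − e₀]` and `v = [e₀]` one has `2u = 0`, `6v = 0` and
`[x] = (x₁ + x₃) u + (x₀ + x₁ + 4x₂ + 2x₃) v` in the quotient, so the induced map is injective;
it is surjective because it sends `u` to `(1, 0)` and `v` to `(0, 1)`.
-/

open QuotientAddGroup

lemma zsmul_eq_zero_of_intCast_zmod_eq_zero {G : Type*} [AddGroup G] {n : ℕ} {g : G}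
    (hg : (n : ℤ) • g = 0) {m : ℤ} (hm : (m : ZMod n) = 0) : m • g = 0 := by
  obtain ⟨k, rfl⟩ := (ZMod.intCast_zmod_eq_zero_iff_dvd m n).1 hm
  rw [mul_comm, mul_zsmul, hg, zsmul_zero]

lemma mem_H_iff {x : Fin 4 → ℤ} : x ∈ H ↔ ∃ c : Fin 4 → ℤ, x = ∑ i, c i • r i :=
  AddSubgroup.mem_closure_range_iff_of_fintype

def toZMod : (Fin 4 → ℤ) →+ ZMod 2 × ZMod 6 where
  toFun x := (((x 1 + x 3 : ℤ) : ZMod 2), ((x 0 + x 1 + 4 * x 2 + 2 * x 3 : ℤ) : ZMod 6))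
  map_zero' := by simp
  map_add' x y := by
    ext <;> simp only [Pi.add_apply, Prod.fst_add, Prod.snd_add] <;> push_cast <;> ring

lemma H_le_ker_toZMod : H ≤ toZMod.ker := by
  refine (AddSubgroup.closure_le _).2 ?_
  rintro _ ⟨i, rfl⟩
  exact toZMod.mem_ker.2 (by fin_cases i <;> decide)

def quotToZMod : (Fin 4 → ℤ) ⧸ H →+ ZMod 2 × ZMod 6 := lift H toZMod H_le_ker_toZMod

lemma two_zsmul_mk_e_one_sub_e_zero : (2 : ℤ) • (mk (e 1 - e 0) : (Fin 4 → ℤ) ⧸ H) = 0 :=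
  (eq_zero_iff _).2 <| mem_H_iff.2 ⟨![-1, 1, 0, 0], by decide⟩

lemma six_zsmul_mk_e_zero : (6 : ℤ) • (mk (e 0) : (Fin 4 → ℤ) ⧸ H) = 0 :=
  (eq_zero_iff _).2 <| mem_H_iff.2 ⟨![1, -2, -1, -2], by decide⟩

lemma mk_eq_zsmul_add_zsmul (x : Fin 4 → ℤ) :
    (mk x : (Fin 4 → ℤ) ⧸ H) =
      (x 1 + x 3) • mk (e 1 - e 0) + (x 0 + x 1 + 4 * x 2 + 2 * x 3) • mk (e 0) := by
  rw [← mk_zsmul, ← mk_zsmul, ← mk_add, eq_iff_sub_mem]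
  -- the difference is `(-4x₂ - x₃, -x₃, x₂, x₃) = x₂ (-r₀ + r₁ + r₂ + r₃) + x₃ r₃`
  refine mem_H_iff.2 ⟨![-x 2, x 2, x 2, x 2 + x 3], ?_⟩
  funext j
  fin_cases j <;> simp [r, B, e, Fin.sum_univ_four]
  ring

lemma quotToZMod_injective : Function.Injective quotToZMod := by
  refine (injective_iff_map_eq_zero _).2 fun q hq => ?_
  induction q using QuotientAddGroup.induction_on with
  | H x =>
    obtain ⟨h2, h6⟩ := Prod.ext_iff.1 hq
    rw [mk_eq_zsmul_add_zsmul,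
      zsmul_eq_zero_of_intCast_zmod_eq_zero two_zsmul_mk_e_one_sub_e_zero h2,
      zsmul_eq_zero_of_intCast_zmod_eq_zero six_zsmul_mk_e_zero h6, add_zero]

lemma quotToZMod_surjective : Function.Surjective quotToZMod := by
  rintro ⟨a, b⟩
  obtain ⟨m, rfl⟩ := ZMod.intCast_surjective a
  obtain ⟨k, rfl⟩ := ZMod.intCast_surjective b
  exact ⟨m • mk (e 1 - e 0) + k • mk (e 0), by simp [quotToZMod, toZMod, e]⟩

theorem stmt_6 :
    ∃ ψ : ((Fin 4 → ℤ) ⧸ H) ≃+ (ZMod 2 × ZMod 6),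
      ψ (QuotientAddGroup.mk (e 0)) = ((0 : ZMod 2), (1 : ZMod 6)) ∧
      ψ (QuotientAddGroup.mk (e 1)) = ((1 : ZMod 2), (1 : ZMod 6)) ∧
      ψ (QuotientAddGroup.mk (e 2)) = ((0 : ZMod 2), (4 : ZMod 6)) ∧
      ψ (QuotientAddGroup.mk (e 3)) = ((1 : ZMod 2), (2 : ZMod 6)) ∧
      ψ (QuotientAddGroup.mk (e 0 + e 1 + e 2 + e 3)) = ((0 : ZMod 2), (2 : ZMod 6)) :=
  ⟨AddEquiv.ofBijective quotToZMod ⟨quotToZMod_injective, quotToZMod_surjective⟩,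
    by decide, by decide, by decide, by decide, by decide⟩
end

section
/- Let B be a row-finite 0-1 matrix on V, let v ∈ V, and suppose Cᵀ is the edge explosion of Bᵀ at v with respect to (M₁, M₂) with M₁ a singleton, v splitting into v′ and v″ (so C is the reverse explosion of B at the corresponding edge). Then there is a bijection φ from the set of infinite paths of B starting at v onto the set of infinite paths of C starting at v″ such that for all such paths x, y and all k : ℤ, x ∼ₖ y (with respect to B) if and only if φ x ∼ₖ φ y (with respect to C); consequently (x,k,y) ↦ (φ x, k, φ y) is a bijection from the pointed path groupoid 𝒢_{(B,{v})} onto 𝒢_{(C,{v″})}. -/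
/-- A 0-1 matrix on an index type `V`. -/
def IsZeroOne {V : Type*} (B : V → V → ℕ) : Prop := ∀ i j, B i j = 0 ∨ B i j = 1

/-- `B` is row-finite: each row has finitely many nonzero entries. -/
def RowFinite {V : Type*} (B : V → V → ℕ) : Prop := ∀ i, {j | B i j ≠ 0}.Finite

/-- The conditions on the data `(v, M₁, M₂)` of a vertex explosion of the 0-1 matrix `B`:
`M₁` and `M₂` are a partition of `supp(B v) = {w | B v w = 1}` into nonempty sets. -/
structure ExplosionData {V : Type*} (B : V → V → ℕ) (v : V) (M₁ M₂ : Set V) : Prop where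
  zeroOne : IsZeroOne B
  nonempty₁ : M₁.Nonempty
  nonempty₂ : M₂.Nonempty
  disj : Disjoint M₁ M₂
  union : M₁ ∪ M₂ = {w | B v w = 1}

open Classical in
/-- The vertex explosion of `B` at `v` with respect to `(M₁, M₂)`; the vertex `v` is split
into `v′ = Sum.inr 0` and `v″ = Sum.inr 1`. -/
noncomputable def vertexExplosion {V : Type*} (B : V → V → ℕ) (v : V) (M₁ M₂ : Set V) :
    ({u : V // u ≠ v} ⊕ Fin 2) → ({u : V // u ≠ v} ⊕ Fin 2) → ℕ
  | Sum.inl u, Sum.inl w => B u.1 w.1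
  | Sum.inl u, Sum.inr _ => B u.1 v
  | Sum.inr a, Sum.inl w => if (a = 0 ∧ w.1 ∈ M₁) ∨ (a = 1 ∧ w.1 ∈ M₂) then 1 else 0
  | Sum.inr a, Sum.inr _ => if (a = 0 ∧ v ∈ M₁) ∨ (a = 1 ∧ v ∈ M₂) then 1 else 0

/-- An infinite path of a 0-1 matrix `B`. -/
def IsPath {V : Type*} (B : V → V → ℕ) (x : ℕ → V) : Prop := ∀ n, B (x n) (x (n + 1)) = 1

/-- `x ∼ₖ y` : `x n = y (n - k)` for all large `n`. -/
def SEquiv {W : Type*} (x : ℕ → W) (k : ℤ) (y : ℕ → W) : Prop :=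
  ∃ N : ℕ, (N : ℤ) ≥ k ∧ ∀ n ≥ N, x n = y (((n : ℤ) - k).toNat)

/-- The path groupoid of `B` pointed at `{v}`, as a set of triples `(x, k, y)`. -/
def PGrpd {V : Type*} (B : V → V → ℕ) (v : V) : Set ((ℕ → V) × ℤ × (ℕ → V)) :=
  {t | IsPath B t.1 ∧ IsPath B t.2.2 ∧ SEquiv t.1 t.2.1 t.2.2 ∧ t.1 0 = v ∧ t.2.2 0 = v}

/-! A `B`-path `x` from `v` has a forced lift to the exploded matrix: a vertex `u ≠ v` stays
itself, and an occurrence of `v` becomes `v′` or `v″` according to whether the preceding vertex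
lies in `M₁` (at time `0` it becomes `v″`). Collapsing `v′, v″` back to `v` inverts the lift on
`C`-paths from `v″`. Since the lift at time `n + 1` only depends on `x n` and `x (n + 1)`, it
preserves and reflects `∼ₖ`, and the isomorphism of pointed groupoids follows formally. -/

section PathLifting

variable {V : Type*}

open Classical in
noncomputable def liftVertex (v : V) (a : Fin 2) (u : V) : {u : V // u ≠ v} ⊕ Fin 2 :=
  if h : u = v then Sum.inr a else Sum.inl ⟨u, h⟩

def collapse (v : V) : {u : V // u ≠ v} ⊕ Fin 2 → V :=
  Sum.elim Subtype.val fun _ => v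

variable {v : V}

@[simp]
lemma collapse_liftVertex (a : Fin 2) (u : V) : collapse v (liftVertex v a u) = u := by
  unfold liftVertex
  split_ifs with h <;> simp [collapse, h]

lemma label_eq_of_liftVertex_eq_inr {a j : Fin 2} {u : V}
    (h : liftVertex v a u = Sum.inr j) : j = a := by
  unfold liftVertex at h
  split_ifs at h
  simp_all

lemma liftVertex_collapse {p : {u : V // u ≠ v} ⊕ Fin 2} {a : Fin 2}
    (h : ∀ j, p = Sum.inr j → j = a) : liftVertex v a (collapse v p) = p := by
  rcases p with u | j
  · simp [liftVertex, collapse, u.2]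
  · simp [liftVertex, collapse, h j rfl]

open Classical in
noncomputable def liftPath (v : V) (M₁ : Set V) (x : ℕ → V) : ℕ → {u : V // u ≠ v} ⊕ Fin 2
  | 0 => liftVertex v 1 (x 0)
  | n + 1 => liftVertex v (if x n ∈ M₁ then 0 else 1) (x (n + 1))

variable {M₁ : Set V}

@[simp]
lemma collapse_liftPath (x : ℕ → V) (n : ℕ) : collapse v (liftPath v M₁ x n) = x n := by
  cases n <;> simp [liftPath]

@[simp]
lemma collapse_comp_liftPath (x : ℕ → V) : collapse v ∘ liftPath v M₁ x = x :=
  funext (collapse_liftPath x)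

lemma liftPath_injective : Function.Injective (liftPath v M₁) := fun x y h => by
  rw [← collapse_comp_liftPath (v := v) (M₁ := M₁) x, h, collapse_comp_liftPath]

lemma liftPath_zero {x : ℕ → V} (h : x 0 = v) : liftPath v M₁ x 0 = Sum.inr 1 := by
  simp [liftPath, liftVertex, h]

end PathLifting

section SEquiv

variable {W W' : Type*} {x y : ℕ → W} {k : ℤ}

lemma SEquiv.comp (f : W → W') (h : SEquiv x k y) : SEquiv (f ∘ x) k (f ∘ y) := by
  obtain ⟨N, hNk, hN⟩ := h
  exact ⟨N, hNk, fun n hn => congrArg f (hN n hn)⟩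

variable {V : Type*} {v : V} {M₁ : Set V} {x y : ℕ → V}

lemma SEquiv.liftPath (h : SEquiv x k y) : SEquiv (liftPath v M₁ x) k (liftPath v M₁ y) := by
  obtain ⟨N, hNk, hN⟩ := h
  refine ⟨N + 1, by omega, fun n hn => ?_⟩
  obtain ⟨m, rfl⟩ : ∃ m, n = m + 1 := ⟨n - 1, by omega⟩
  have hshift : (((m + 1 : ℕ) : ℤ) - k).toNat = ((m : ℤ) - k).toNat + 1 := by omega
  rw [hshift]
  simp only [_root_.liftPath]
  rw [hN m (by omega), hN (m + 1) (by omega), hshift]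

lemma sEquiv_liftPath_iff : SEquiv (liftPath v M₁ x) k (liftPath v M₁ y) ↔ SEquiv x k y := by
  refine ⟨fun h => ?_, SEquiv.liftPath⟩
  simpa using h.comp (collapse v)

end SEquiv

section InEdgeSplitting

variable {V : Type*}

/-- `C` arises from `B` by splitting `v` into two copies, where an edge into `v` lands on the
copy `0` if its source lies in `M₁` and on the copy `1` otherwise. -/
def SplitsInEdges (B : V → V → ℕ) (v : V) (M₁ : Set V)
    (C : ({u : V // u ≠ v} ⊕ Fin 2) → ({u : V // u ≠ v} ⊕ Fin 2) → ℕ) : Prop :=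
  ∀ p q, C p q = 1 ↔
    B (collapse v p) (collapse v q) = 1 ∧ ∀ j, q = Sum.inr j → (j = 0 ↔ collapse v p ∈ M₁)

lemma ExplosionData.splitsInEdges {B : V → V → ℕ} {v : V} {M₁ M₂ : Set V}
    (hdata : ExplosionData (fun a b => B b a) v M₁ M₂) :
    SplitsInEdges B v M₁ fun p q => vertexExplosion (fun a b => B b a) v M₁ M₂ q p := by
  have hlabel : ∀ (u : V) (j : Fin 2),
      ((j = 0 ∧ u ∈ M₁) ∨ (j = 1 ∧ u ∈ M₂)) ↔ B u v = 1 ∧ (j = 0 ↔ u ∈ M₁) := by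
    intro u j
    have hpred : B u v = 1 ↔ u ∈ M₁ ∨ u ∈ M₂ := by
      rw [← Set.mem_union, hdata.union, Set.mem_ofPred_eq]
    have hdisj : u ∈ M₂ → u ∉ M₁ := fun h₂ h₁ => Set.disjoint_left.mp hdata.disj h₁ h₂
    fin_cases j <;> simp only [hpred] <;> simp <;> tauto
  rintro (a | i) (b | j) <;> simp [vertexExplosion, collapse, hlabel]

variable {B : V → V → ℕ} {v : V} {M₁ : Set V}
  {C : ({u : V // u ≠ v} ⊕ Fin 2) → ({u : V // u ≠ v} ⊕ Fin 2) → ℕ}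

namespace SplitsInEdges

variable (hC : SplitsInEdges B v M₁ C)
include hC

lemma isPath_liftPath {x : ℕ → V} (hx : IsPath B x) : IsPath C (liftPath v M₁ x) := by
  intro n
  rw [hC]
  refine ⟨by simpa using hx n, fun j hj => ?_⟩
  rw [label_eq_of_liftVertex_eq_inr hj]
  simp

lemma isPath_collapse {z : ℕ → {u : V // u ≠ v} ⊕ Fin 2} (hz : IsPath C z) :
    IsPath B (collapse v ∘ z) :=
  fun n => ((hC _ _).mp (hz n)).1

lemma liftPath_collapse {z : ℕ → {u : V // u ≠ v} ⊕ Fin 2} (hz : IsPath C z)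
    (hz0 : z 0 = Sum.inr 1) : liftPath v M₁ (collapse v ∘ z) = z := by
  funext n
  cases n with
  | zero => exact liftVertex_collapse fun j hj => by simpa [hz0] using hj.symm
  | succ n =>
    refine liftVertex_collapse fun j hj => ?_
    have hlabel := ((hC _ _).mp (hz n)).2 j hj
    split_ifs with h
    · exact hlabel.mpr h
    · exact j.eq_one_of_ne_zero (mt hlabel.mp h)

lemma bijOn_liftPath :
    Set.BijOn (liftPath v M₁) {x | IsPath B x ∧ x 0 = v} {z | IsPath C z ∧ z 0 = Sum.inr 1} :=
  ⟨fun _ hx => ⟨hC.isPath_liftPath hx.1, liftPath_zero hx.2⟩,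
    liftPath_injective.injOn,
    fun z hz => ⟨collapse v ∘ z, ⟨hC.isPath_collapse hz.1, by simp [hz.2, collapse]⟩,
      hC.liftPath_collapse hz.1 hz.2⟩⟩

end SplitsInEdges

end InEdgeSplitting

lemma bijOn_pGrpd {V W : Type*} {B : V → V → ℕ} {C : W → W → ℕ} {v : V} {w : W}
    {φ : (ℕ → V) → ℕ → W}
    (hφ : Set.BijOn φ {x | IsPath B x ∧ x 0 = v} {y | IsPath C y ∧ y 0 = w})
    (hequiv : ∀ x y, IsPath B x ∧ x 0 = v → IsPath B y ∧ y 0 = v →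
      ∀ k : ℤ, (SEquiv x k y ↔ SEquiv (φ x) k (φ y))) :
    Set.BijOn (fun t : (ℕ → V) × ℤ × (ℕ → V) => (φ t.1, t.2.1, φ t.2.2))
      (PGrpd B v) (PGrpd C w) := by
  refine ⟨?_, ?_, ?_⟩
  · rintro ⟨x, k, y⟩ ⟨hx, hy, hxy, hx0, hy0⟩
    obtain ⟨hφx, hφx0⟩ := hφ.mapsTo ⟨hx, hx0⟩
    obtain ⟨hφy, hφy0⟩ := hφ.mapsTo ⟨hy, hy0⟩
    exact ⟨hφx, hφy, (hequiv x y ⟨hx, hx0⟩ ⟨hy, hy0⟩ k).mp hxy, hφx0, hφy0⟩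
  · rintro ⟨x, k, y⟩ ⟨hx, hy, -, hx0, hy0⟩ ⟨x', k', y'⟩ ⟨hx', hy', -, hx'0, hy'0⟩ h
    simp only [Prod.mk.injEq] at h ⊢
    exact ⟨hφ.injOn ⟨hx, hx0⟩ ⟨hx', hx'0⟩ h.1, h.2.1, hφ.injOn ⟨hy, hy0⟩ ⟨hy', hy'0⟩ h.2.2⟩
  · rintro ⟨z, k, z'⟩ ⟨hz, hz', hzz', hz0, hz'0⟩
    obtain ⟨x, hx, rfl⟩ := hφ.surjOn ⟨hz, hz0⟩
    obtain ⟨y, hy, rfl⟩ := hφ.surjOn ⟨hz', hz'0⟩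
    exact ⟨(x, k, y), ⟨hx.1, hy.1, (hequiv x y hx hy k).mpr hzz', hx.2, hy.2⟩, rfl⟩

theorem stmt_13_general {V : Type*} (B : V → V → ℕ) (v : V) (M₁ M₂ : Set V)
    (hdata : ExplosionData (fun a b => B b a) v M₁ M₂)
    (C : ({u : V // u ≠ v} ⊕ Fin 2) → ({u : V // u ≠ v} ⊕ Fin 2) → ℕ)
    (hC : ∀ i j, C i j = vertexExplosion (fun a b => B b a) v M₁ M₂ j i) :
    ∃ φ : (ℕ → V) → (ℕ → ({u : V // u ≠ v} ⊕ Fin 2)),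
      Set.BijOn φ {x | IsPath B x ∧ x 0 = v} {y | IsPath C y ∧ y 0 = Sum.inr 1} ∧
      (∀ x y, IsPath B x ∧ x 0 = v → IsPath B y ∧ y 0 = v →
        ∀ k : ℤ, (SEquiv x k y ↔ SEquiv (φ x) k (φ y))) ∧
      Set.BijOn (fun t : (ℕ → V) × ℤ × (ℕ → V) => (φ t.1, t.2.1, φ t.2.2))
        (PGrpd B v) (PGrpd C (Sum.inr 1)) := by
  obtain rfl : C = fun i j => vertexExplosion (fun a b => B b a) v M₁ M₂ j i := funext₂ hC
  have hbij := hdata.splitsInEdges.bijOn_liftPath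
  have hequiv : ∀ x y, IsPath B x ∧ x 0 = v → IsPath B y ∧ y 0 = v →
      ∀ k : ℤ, (SEquiv x k y ↔ SEquiv (liftPath v M₁ x) k (liftPath v M₁ y)) :=
    fun _ _ _ _ _ => sEquiv_liftPath_iff.symm
  exact ⟨liftPath v M₁, hbij, hequiv, bijOn_pGrpd hbij hequiv⟩

/-- If `Cᵀ` is the edge explosion of `Bᵀ` at `v` (so `C` is the reverse explosion of `B`
at the corresponding edge, with `v` splitting into `v′ = Sum.inr 0` and `v″ = Sum.inr 1`),
then the path spaces pointed at `v` resp. `v″` are equivariantly bijective, and the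
pointed path groupoids are isomorphic. -/
theorem stmt_13 {V : Type*} (B : V → V → ℕ) (v : V) (M₁ M₂ : Set V)
    (hrf : RowFinite B) (hdata : ExplosionData (fun a b => B b a) v M₁ M₂)
    (hsingleton : ∃ e, M₁ = {e})
    (C : ({u : V // u ≠ v} ⊕ Fin 2) → ({u : V // u ≠ v} ⊕ Fin 2) → ℕ)
    (hC : ∀ i j, C i j = vertexExplosion (fun a b => B b a) v M₁ M₂ j i) :
    ∃ φ : (ℕ → V) → (ℕ → ({u : V // u ≠ v} ⊕ Fin 2)),
      Set.BijOn φ {x | IsPath B x ∧ x 0 = v} {y | IsPath C y ∧ y 0 = Sum.inr 1} ∧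
      (∀ x y, IsPath B x ∧ x 0 = v → IsPath B y ∧ y 0 = v →
        ∀ k : ℤ, (SEquiv x k y ↔ SEquiv (φ x) k (φ y))) ∧
      Set.BijOn (fun t : (ℕ → V) × ℤ × (ℕ → V) => (φ t.1, t.2.1, φ t.2.2))
        (PGrpd B v) (PGrpd C (Sum.inr 1)) :=
  stmt_13_general B v M₁ M₂ hdata C hC
end
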